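/- Let ω = (ω₀, …, ω_{n+1}) be a primitive algebraic key sequence and θ ∈ (ℂ*)ⁿ. In Â := ℂ[ŵ, ŷ₁, …, ŷ_{n+1}], let Î be the ideal generated by Ĝ₁, …, Ĝ_n, where Ĝ_k := ŵ^{α_k·ω_k − ω_{k+1}}·ŷ_{k+1} − ( ŷ_k^{α_k} − θ_k·∏_{j=1}^{k−1} ŷ_j^{β_{k,j}} ). Then the image of ŵ in Â/Î is a nonzerodivisor; equivalently, for every ĝ ∈ Â and every N ≥ 0, if ŵ^N·ĝ ∈ Î then ĝ ∈ Î. -/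

import Mathlib

/-- `dks ω k` is `gcd(|ω₀|, …, |ω_k|)`. -/
def dks (ω : ℕ → ℤ) (k : ℕ) : ℕ :=
  (Finset.range (k + 1)).gcd fun j => (ω j).natAbs

/-- `alphaK ω k` is `α_k = d_{k−1}/d_k`. -/
def alphaK (ω : ℕ → ℤ) (k : ℕ) : ℕ := dks ω (k - 1) / dks ω k

/-- A key sequence `(ω₀, …, ω_{n+1})`. -/
def IsKeySequence (n : ℕ) (ω : ℕ → ℤ) : Prop :=
  1 ≤ ω 0 ∧ dks ω (n + 1) = 1 ∧
    ∀ k, 1 ≤ k → k ≤ n → ω (k + 1) < (alphaK ω k : ℤ) * ω k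

/-- A key sequence is primitive iff `ω_{n+1} > 0`. -/
def IsPrimitive (n : ℕ) (ω : ℕ → ℤ) : Prop := 0 < ω (n + 1)

/-- `β k` is, for `1 ≤ k ≤ n`, the unique representation tuple of `α_k·ω_k`. -/
def IsRepTuple (n : ℕ) (ω : ℕ → ℤ) (β : ℕ → ℕ → ℤ) : Prop :=
  ∀ k, 1 ≤ k → k ≤ n →
    (∀ j, 1 ≤ j → j < k → 0 ≤ β k j ∧ β k j < (alphaK ω j : ℤ)) ∧
      (alphaK ω k : ℤ) * ω k = ∑ j ∈ Finset.range k, β k j * ω j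

open Fin.NatCast in
/-- The polynomial `Ĝ_k = ŵ^{α_k·ω_k − ω_{k+1}}·ŷ_{k+1} − (ŷ_k^{α_k} − θ_k·∏_{j=1}^{k−1} ŷ_j^{β_{k,j}})`
in `Â = ℂ[ŵ, ŷ₁, …, ŷ_{n+1}]`, where `ŵ` is the variable of index `0` and `ŷ_j` the
variable of index `j`. -/
noncomputable def Ghat (n : ℕ) (ω : ℕ → ℤ) (θ : ℕ → ℂ) (β : ℕ → ℕ → ℤ) (k : ℕ) :
    MvPolynomial (Fin (n + 2)) ℂ :=
  MvPolynomial.X (0 : Fin (n + 2)) ^ (((alphaK ω k : ℤ) * ω k - ω (k + 1)).toNat) *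
      MvPolynomial.X ((k + 1 : ℕ) : Fin (n + 2)) -
    (MvPolynomial.X ((k : ℕ) : Fin (n + 2)) ^ alphaK ω k -
      MvPolynomial.C (θ k) *
        ∏ j ∈ Finset.Ico 1 k, MvPolynomial.X ((j : ℕ) : Fin (n + 2)) ^ (β k j).toNat)

/-- The ideal `Î = (Ĝ₁, …, Ĝ_n) ⊆ Â`. -/
noncomputable def Ihat (n : ℕ) (ω : ℕ → ℤ) (θ : ℕ → ℂ) (β : ℕ → ℕ → ℤ) :
    Ideal (MvPolynomial (Fin (n + 2)) ℂ) :=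
  Ideal.span (Ghat n ω θ β '' Set.Icc 1 n)


/-- The algebraicity condition: `α_k·ω_k ∈ ℤ_{≥0}⟨ω₀, …, ω_{k−1}⟩` for `1 ≤ k ≤ n`. -/
def IsAlgebraicKeySeq (n : ℕ) (ω : ℕ → ℤ) : Prop :=
  ∀ k, 1 ≤ k → k ≤ n → ∃ c : ℕ → ℕ,
    (alphaK ω k : ℤ) * ω k = ∑ j ∈ Finset.range k, (c j : ℤ) * ω j

/-
Induct on the number of generators. Write `Iₜ = (Ĝ₁, …, Ĝₜ)` and `Fₖ = ŷₖ^{αₖ} − θₖ ∏ ŷⱼ^{β_{k,j}}`,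
so that `Ĝₖ ≡ −Fₖ` modulo `ŵ` because the exponent `αₖωₖ − ω_{k+1}` is positive. Hence
`Iₜ + (ŵ) = (ŵ, F₁, …, Fₜ)`, whose generators do not involve `ŷ_{t+1}`, while `F_{t+1}` is monic
in `ŷ_{t+1}`; so `Ĝ_{t+1}` is a nonzerodivisor modulo `Iₜ + (ŵ)`. Together with `ŵ` being a
nonzerodivisor modulo `Iₜ`, this makes `ŵ` a nonzerodivisor modulo `I_{t+1}`.
-/

namespace Ideal

variable {R : Type*} [CommRing R]

theorem mem_of_pow_mul_mem {I : Ideal R} {w : R} (hw : ∀ x, w * x ∈ I → x ∈ I) (N : ℕ) {x : R}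
    (h : w ^ N * x ∈ I) : x ∈ I := by
  induction N generalizing x with
  | zero => simpa using h
  | succ N ih =>
    rw [pow_succ, mul_assoc] at h
    exact hw x (ih h)

theorem mem_sup_span_singleton_of_mul_mem {I : Ideal R} {w G : R}
    (hw : ∀ x, w * x ∈ I → x ∈ I)
    (hG : ∀ x, G * x ∈ I ⊔ span {w} → x ∈ I ⊔ span {w}) {g : R}
    (h : w * g ∈ I ⊔ span {G}) : g ∈ I ⊔ span {G} := by
  obtain ⟨a, ha, b, hb, hab⟩ := Submodule.mem_sup.mp h
  obtain ⟨q, rfl⟩ := mem_span_singleton'.mp hb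
  have hq : G * q ∈ I ⊔ span {w} := by
    have hGq : G * q = -a + w * g := by linear_combination hab
    rw [hGq]
    exact add_mem (mem_sup_left (neg_mem ha))
      (mem_sup_right (mem_span_singleton'.mpr ⟨g, mul_comm g w⟩))
  obtain ⟨b', hb', c, hc, rfl⟩ := Submodule.mem_sup.mp (hG q hq)
  obtain ⟨r, rfl⟩ := mem_span_singleton'.mp hc
  have hgr : g - r * G ∈ I := by
    refine hw _ ?_
    have hwg : w * (g - r * G) = a + b' * G := by linear_combination -hab
    rw [hwg]
    exact add_mem ha (mul_mem_right _ _ hb')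
  have hg : g = (g - r * G) + r * G := by ring
  rw [hg]
  exact add_mem (mem_sup_left hgr) (mem_sup_right (mem_span_singleton'.mpr ⟨r, rfl⟩))

theorem span_image_sup_le_of_add_mem {ι : Type*} {A : Set ι} {f g : ι → R} {K : Ideal R}
    (h : ∀ i ∈ A, f i + g i ∈ K) : span (f '' A) ⊔ K ≤ span (g '' A) ⊔ K := by
  refine sup_le (span_le.mpr ?_) le_sup_right
  rintro _ ⟨i, hi, rfl⟩
  have hfi : f i = -g i + (f i + g i) := by ring
  rw [SetLike.mem_coe, hfi]
  exact add_mem (mem_sup_left (neg_mem (subset_span ⟨i, hi, rfl⟩))) (mem_sup_right (h i hi))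

end Ideal

open Polynomial in
theorem Polynomial.Monic.mem_map_C_of_mul_mem {S : Type*} [CommRing S] {I : Ideal S}
    {p q : S[X]} (hp : p.Monic) (h : q * p ∈ I.map C) : q ∈ I.map C := by
  rw [← Ideal.mk_ker (I := I), ← ker_mapRingHom, RingHom.mem_ker] at h ⊢
  rw [map_mul] at h
  exact (hp.map _).mul_left_eq_zero_iff.mp h

namespace MvPolynomial

variable {R σ : Type*} [CommRing R] [DecidableEq σ]

variable (R) in
noncomputable def polynomialEquivAt (v : σ) :
    MvPolynomial σ R ≃ₐ[R] Polynomial (MvPolynomial {j // j ≠ v} R) :=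
  (renameEquiv R (Equiv.optionSubtypeNe v).symm).trans (optionEquivLeft R _)

theorem polynomialEquivAt_X_self (v : σ) :
    polynomialEquivAt R v (X v) = Polynomial.X := by
  simp [polynomialEquivAt]

theorem polynomialEquivAt_mem_range_C {v : σ} {f : MvPolynomial σ R}
    (hf : f ∈ supported R {v}ᶜ) : polynomialEquivAt R v f ∈
      (Polynomial.C : MvPolynomial {j // j ≠ v} R →+* _).range := by
  have he : (polynomialEquivAt R v).symm.toAlgHom.comp Polynomial.CAlgHom =
      rename Subtype.val := by
    ext
    simp [polynomialEquivAt]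
  obtain ⟨g, rfl⟩ := exists_rename_eq_of_vars_subset_range f (Subtype.val : {j // j ≠ v} → σ)
    Subtype.val_injective fun x hx => ⟨⟨x, mem_supported.mp hf hx⟩, rfl⟩
  exact ⟨g, by rw [← he]; simp⟩

theorem mem_span_of_mul_X_pow_sub_mem {v : σ} {s : Set (MvPolynomial σ R)}
    (hs : s ⊆ supported R {v}ᶜ) {c : MvPolynomial σ R} (hc : c ∈ supported R {v}ᶜ) {a : ℕ}
    (ha : a ≠ 0) {q : MvPolynomial σ R} (h : q * (X v ^ a - c) ∈ Ideal.span s) :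
    q ∈ Ideal.span s := by
  set e := polynomialEquivAt R v
  -- `s` lies in the coefficient ring of `e`, so its image is extended from that ring
  have hmap : (Ideal.span s).map e =
      (((Ideal.span s).map e).comap Polynomial.C).map Polynomial.C := by
    refine le_antisymm ?_ Ideal.map_comap_le
    rw [Ideal.map_span, Ideal.span_le]
    rintro _ ⟨f, hf, rfl⟩
    obtain ⟨g, hg⟩ := polynomialEquivAt_mem_range_C (hs hf)
    rw [SetLike.mem_coe, ← hg]
    refine Ideal.mem_map_of_mem _ (Ideal.mem_comap.mpr ?_)
    rw [hg]
    exact Ideal.subset_span ⟨f, hf, rfl⟩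
  obtain ⟨c', hc'⟩ := polynomialEquivAt_mem_range_C hc
  have hmonic : (e (X v ^ a - c)).Monic := by
    rw [map_sub, map_pow, polynomialEquivAt_X_self, ← hc']
    exact Polynomial.monic_X_pow_sub_C _ ha
  have heq := hmonic.mem_map_C_of_mul_mem
    (by rw [← hmap, ← map_mul]; exact Ideal.mem_map_of_mem _ h)
  rw [← hmap] at heq
  obtain ⟨x, hx, hxq⟩ := (Ideal.mem_map_of_equiv e _).mp heq
  rwa [← e.injective hxq]

end MvPolynomial

theorem dks_pos {ω : ℕ → ℤ} (h : 1 ≤ ω 0) (k : ℕ) : 0 < dks ω k := by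
  refine Nat.pos_of_ne_zero fun h0 => ?_
  have := Finset.gcd_eq_zero_iff.mp h0 0 (Finset.mem_range.mpr k.succ_pos)
  omega

theorem dks_dvd_dks_sub_one (ω : ℕ → ℤ) (k : ℕ) : dks ω k ∣ dks ω (k - 1) :=
  Finset.dvd_gcd fun j hj =>
    Finset.gcd_dvd (Finset.mem_range.mpr (by simp only [Finset.mem_range] at hj; omega))

theorem alphaK_pos {ω : ℕ → ℤ} (h : 1 ≤ ω 0) (k : ℕ) : 0 < alphaK ω k :=
  Nat.div_pos (Nat.le_of_dvd (dks_pos h _) (dks_dvd_dks_sub_one ω k)) (dks_pos h k)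

section KeyPolynomials

open MvPolynomial Fin.NatCast

variable {n : ℕ} {ω : ℕ → ℤ} {θ : ℕ → ℂ} {β : ℕ → ℕ → ℤ}

noncomputable def keyMonomial (n : ℕ) (θ : ℕ → ℂ) (β : ℕ → ℕ → ℤ) (k : ℕ) :
    MvPolynomial (Fin (n + 2)) ℂ :=
  C (θ k) * ∏ j ∈ Finset.Ico 1 k, X ((j : ℕ) : Fin (n + 2)) ^ (β k j).toNat

noncomputable def Fhat (n : ℕ) (ω : ℕ → ℤ) (θ : ℕ → ℂ) (β : ℕ → ℕ → ℤ) (k : ℕ) :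
    MvPolynomial (Fin (n + 2)) ℂ :=
  X ((k : ℕ) : Fin (n + 2)) ^ alphaK ω k - keyMonomial n θ β k

theorem Ghat_add_Fhat_mem_span_X_zero {k : ℕ} (hk : ω (k + 1) < (alphaK ω k : ℤ) * ω k) :
    Ghat n ω θ β k + Fhat n ω θ β k ∈ Ideal.span {X 0} := by
  rw [Ghat, Fhat, keyMonomial, sub_add_cancel, Ideal.mem_span_singleton]
  exact (dvd_pow_self _ (by omega)).mul_right _

theorem X_natCast_mem_supported {j t : ℕ} (hj : j ≤ t) :
    X ((j : ℕ) : Fin (n + 2)) ∈ supported ℂ {i : Fin (n + 2) | (i : ℕ) ≤ t} :=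
  X_mem_supported.mpr ((Fin.val_natCast j (n + 2)).trans_le ((Nat.mod_le _ _).trans hj))

theorem keyMonomial_mem_supported {k t : ℕ} (hk : k ≤ t + 1) :
    keyMonomial n θ β k ∈ supported ℂ {i : Fin (n + 2) | (i : ℕ) ≤ t} :=
  Subalgebra.mul_mem _ (Subalgebra.algebraMap_mem _ (θ k)) <|
    Subalgebra.prod_mem _ fun j hj =>
      Subalgebra.pow_mem _ (X_natCast_mem_supported (by simp at hj; omega)) _

theorem Fhat_mem_supported {k t : ℕ} (hk : k ≤ t) :
    Fhat n ω θ β k ∈ supported ℂ {i : Fin (n + 2) | (i : ℕ) ≤ t} :=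
  Subalgebra.sub_mem _ (Subalgebra.pow_mem _ (X_natCast_mem_supported hk) _)
    (keyMonomial_mem_supported (by omega))

theorem span_Ghat_Icc_succ (t : ℕ) :
    Ideal.span (Ghat n ω θ β '' Set.Icc 1 (t + 1)) =
      Ideal.span (Ghat n ω θ β '' Set.Icc 1 t) ⊔ Ideal.span {Ghat n ω θ β (t + 1)} := by
  rw [← Set.insert_Icc_right_eq_Icc_add_one (by omega), Set.image_insert_eq, Ideal.span_insert,
    sup_comm]

theorem span_Ghat_sup_span_X_zero {t : ℕ}
    (hlt : ∀ k, 1 ≤ k → k ≤ t → ω (k + 1) < (alphaK ω k : ℤ) * ω k) :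
    Ideal.span (Ghat n ω θ β '' Set.Icc 1 t) ⊔ Ideal.span {X 0} =
      Ideal.span (insert (X 0) (Fhat n ω θ β '' Set.Icc 1 t)) := by
  have hadd : ∀ k ∈ Set.Icc 1 t, Ghat n ω θ β k + Fhat n ω θ β k ∈ Ideal.span {X 0} :=
    fun k hk => Ghat_add_Fhat_mem_span_X_zero (hlt k hk.1 hk.2)
  have hadd' : ∀ k ∈ Set.Icc 1 t, Fhat n ω θ β k + Ghat n ω θ β k ∈ Ideal.span {X 0} :=
    fun k hk => add_comm (Fhat n ω θ β k) _ ▸ hadd k hk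
  rw [Ideal.span_insert, sup_comm (Ideal.span {X 0})]
  exact le_antisymm (Ideal.span_image_sup_le_of_add_mem hadd)
    (Ideal.span_image_sup_le_of_add_mem hadd')

theorem mem_span_Ghat_sup_span_X_zero_of_mul_mem {t : ℕ} (ht : t + 1 ≤ n) (hω0 : 1 ≤ ω 0)
    (hlt : ∀ k, 1 ≤ k → k ≤ n → ω (k + 1) < (alphaK ω k : ℤ) * ω k)
    {x : MvPolynomial (Fin (n + 2)) ℂ}
    (h : Ghat n ω θ β (t + 1) * x ∈
      Ideal.span (Ghat n ω θ β '' Set.Icc 1 t) ⊔ Ideal.span {X 0}) :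
    x ∈ Ideal.span (Ghat n ω θ β '' Set.Icc 1 t) ⊔ Ideal.span {X 0} := by
  rw [span_Ghat_sup_span_X_zero fun k hk1 hk2 => hlt k hk1 (by omega)] at h ⊢
  set v : Fin (n + 2) := ((t + 1 : ℕ) : Fin (n + 2))
  have hsupp : supported ℂ {i : Fin (n + 2) | (i : ℕ) ≤ t} ≤ supported ℂ {v}ᶜ := by
    refine supported_mono fun i hi hiv => ?_
    rw [Set.mem_singleton_iff.mp hiv, Set.mem_ofPred_eq, Fin.val_cast_of_lt (by omega)] at hi
    omega
  have hs : insert (X 0) (Fhat n ω θ β '' Set.Icc 1 t) ⊆ supported ℂ {v}ᶜ := by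
    rintro _ (rfl | ⟨k, hk, rfl⟩)
    · exact hsupp (X_mem_supported.mpr (Nat.zero_le t))
    · exact hsupp (Fhat_mem_supported hk.2)
  refine mem_span_of_mul_X_pow_sub_mem hs
    (hsupp (keyMonomial_mem_supported (θ := θ) (β := β) le_rfl))
    (alphaK_pos hω0 (t + 1)).ne' ?_
  have hX : Ideal.span {X 0} ≤ Ideal.span (insert (X 0) (Fhat n ω θ β '' Set.Icc 1 t)) :=
    Ideal.span_mono (Set.singleton_subset_iff.mpr (Set.mem_insert _ _))
  have hGF := hX (Ghat_add_Fhat_mem_span_X_zero (θ := θ) (β := β) (hlt (t + 1) (by omega) ht))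
  have hxF : x * Fhat n ω θ β (t + 1) =
      x * (Ghat n ω θ β (t + 1) + Fhat n ω θ β (t + 1)) - Ghat n ω θ β (t + 1) * x := by ring
  exact hxF ▸ sub_mem (Ideal.mul_mem_left _ _ hGF) h

theorem mem_span_Ghat_of_X_zero_mul_mem (hω0 : 1 ≤ ω 0)
    (hlt : ∀ k, 1 ≤ k → k ≤ n → ω (k + 1) < (alphaK ω k : ℤ) * ω k) {t : ℕ} (ht : t ≤ n)
    {x : MvPolynomial (Fin (n + 2)) ℂ}
    (h : X 0 * x ∈ Ideal.span (Ghat n ω θ β '' Set.Icc 1 t)) :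
    x ∈ Ideal.span (Ghat n ω θ β '' Set.Icc 1 t) := by
  induction t generalizing x with
  | zero =>
    simp only [Set.Icc_eq_empty_of_lt zero_lt_one, Set.image_empty, Ideal.span_empty,
      Ideal.mem_bot, mul_eq_zero, X_ne_zero, false_or] at h ⊢
    exact h
  | succ t ih =>
    rw [span_Ghat_Icc_succ] at h ⊢
    exact Ideal.mem_sup_span_singleton_of_mul_mem (fun y => ih (by omega))
      (fun y => mem_span_Ghat_sup_span_X_zero_of_mul_mem ht hω0 hlt) h

end KeyPolynomials

theorem stmt6_general (n : ℕ) (ω : ℕ → ℤ) (θ : ℕ → ℂ) (β : ℕ → ℕ → ℤ)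
    (hω : IsKeySequence n ω) :
    ∀ (gg : MvPolynomial (Fin (n + 2)) ℂ) (N : ℕ),
      MvPolynomial.X (0 : Fin (n + 2)) ^ N * gg ∈ Ihat n ω θ β → gg ∈ Ihat n ω θ β :=
  fun _ N => Ideal.mem_of_pow_mul_mem
    (fun _ => mem_span_Ghat_of_X_zero_mul_mem hω.1 hω.2.2 le_rfl) N

/-- For a primitive algebraic key sequence, the image of `ŵ` in `Â/Î` is a
nonzerodivisor: if `ŵ^N·gg ∈ Î` then `gg ∈ Î`. -/
theorem stmt6 (n : ℕ) (ω : ℕ → ℤ) (θ : ℕ → ℂ) (β : ℕ → ℕ → ℤ)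
    (hω : IsKeySequence n ω) (hprim : IsPrimitive n ω) (halg : IsAlgebraicKeySeq n ω)
    (hθ : ∀ k, 1 ≤ k → k ≤ n → θ k ≠ 0) (hβ : IsRepTuple n ω β) :
    ∀ (gg : MvPolynomial (Fin (n + 2)) ℂ) (N : ℕ),
      MvPolynomial.X (0 : Fin (n + 2)) ^ N * gg ∈ Ihat n ω θ β → gg ∈ Ihat n ω θ β :=
  stmt6_general n ω θ β hω
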